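/- One-step error bound for approximate policy iteration: if ‖V − v^π‖_∞ ≤ ε and ‖T_{π'} V − T_* V‖_∞ ≤ δ, then ‖v^{π'} − v*‖_∞ ≤ γ ‖v^π − v*‖_∞ + (δ + 2γε)/(1−γ). -/

import Mathlib

/-!
Both `T_{π'}` and `T_*` are monotone and map `u ≤ w + C` to `T u ≤ T w + γ C`; for such an
operator `T` with fixed point `v`, the inequality `u ≤ T u + β` forces `u ≤ v + β / (1 - γ)`.
Since `V` is `ε`-close to `v^π` and `π'` is `δ`-greedy for `V`, we get
`v^π = T_π v^π ≤ T_* v^π ≤ T_{π'} v^π + β` with `β = δ + 2γε`, hence `v^π ≤ v^{π'} + β / (1 - γ)`.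
Then `v* = T_* v* ≤ T_* v^π + γ‖v^π - v*‖ ≤ T_{π'} v^{π'} + γ‖v^π - v*‖ + β / (1 - γ)`,
while `v^{π'} ≤ T_* v^{π'}` gives `v^{π'} ≤ v*`.
-/

open Finset

def DiscountedMonotone {ι : Type*} (γ : ℝ) (T : (ι → ℝ) → ι → ℝ) : Prop :=
  ∀ (u w : ι → ℝ) (C : ℝ), (∀ s, u s ≤ w s + C) → ∀ s, T u s ≤ T w s + γ * C

section Operators

variable {ι : Type*} [Fintype ι]

lemma apply_le_add_of_norm_sub_le {u w : ι → ℝ} {c : ℝ} (h : ‖u - w‖ ≤ c) (s : ι) :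
    u s ≤ w s + c := by
  have hs := (norm_le_pi_norm (u - w) s).trans h
  rw [Pi.sub_apply, Real.norm_eq_abs] at hs
  linarith [le_abs_self (u s - w s)]

lemma norm_sub_le_of_forall_le_add {u w : ι → ℝ} {c : ℝ} (hc : 0 ≤ c)
    (huw : ∀ s, u s ≤ w s + c) (hwu : ∀ s, w s ≤ u s + c) : ‖u - w‖ ≤ c := by
  refine (pi_norm_le_iff_of_nonneg hc).mpr fun s => ?_
  rw [Pi.sub_apply, Real.norm_eq_abs, abs_le]
  constructor <;> linarith [huw s, hwu s]

variable {γ β : ℝ} {T : (ι → ℝ) → ι → ℝ}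

lemma DiscountedMonotone.le_add_of_le_apply_add (hT : DiscountedMonotone γ T) (hγ1 : γ < 1)
    {u v : ι → ℝ} (hv : T v = v) (hu : ∀ s, u s ≤ T u s + β) (s : ι) :
    u s ≤ v s + β / (1 - γ) := by
  have : Nonempty ι := ⟨s⟩
  set m := univ.sup' univ_nonempty fun s => u s - v s
  have hm : ∀ s, u s ≤ v s + m := fun s => by
    linarith [le_sup' (fun s => u s - v s) (mem_univ s)]
  have hm_step : m ≤ β + γ * m := sup'_le _ _ fun s _ => by
    linarith [hu s, hT u v m hm s, congrFun hv s]
  have hm_bound : m ≤ β / (1 - γ) := by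
    rw [le_div_iff₀ (by linarith)]
    linarith
  linarith [hm s]

end Operators

section AbstractBound

variable {ι : Type*} [Fintype ι] {γ ε δ : ℝ} {T' Tstar : (ι → ℝ) → ι → ℝ} {v vstar V : ι → ℝ}

lemma optimal_le_greedy_add (hstar : DiscountedMonotone γ Tstar)
    (hT' : DiscountedMonotone γ T') (hpev : ‖V - v‖ ≤ ε) (hpim : ‖T' V - Tstar V‖ ≤ δ)
    (s : ι) : Tstar v s ≤ T' v s + (δ + 2 * γ * ε) := by
  have hVv := apply_le_add_of_norm_sub_le hpev
  have hvV := apply_le_add_of_norm_sub_le ((norm_sub_rev v V).trans_le hpev)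
  have hgreedy := apply_le_add_of_norm_sub_le ((norm_sub_rev _ _).trans_le hpim) s
  linarith [hstar v V ε hvV s, hT' V v ε hVv s]

theorem norm_sub_le_of_approx_policy_improvement (hγ0 : 0 ≤ γ) (hγ1 : γ < 1)
    (hstar : DiscountedMonotone γ Tstar) (hT' : DiscountedMonotone γ T')
    (hT'_le : ∀ w s, T' w s ≤ Tstar w s) (hv_le : ∀ s, v s ≤ Tstar v s)
    {v' : ι → ℝ} (hv' : T' v' = v') (hvstar : Tstar vstar = vstar)
    (hpev : ‖V - v‖ ≤ ε) (hpim : ‖T' V - Tstar V‖ ≤ δ) :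
    ‖v' - vstar‖ ≤ γ * ‖v - vstar‖ + (δ + 2 * γ * ε) / (1 - γ) := by
  set β := δ + 2 * γ * ε
  have hβ : 0 ≤ β := by
    have := (norm_nonneg _).trans hpev
    have := (norm_nonneg _).trans hpim
    positivity
  have hbackup := optimal_le_greedy_add hstar hT' hpev hpim
  have hv_v' : ∀ s, v s ≤ v' s + β / (1 - γ) :=
    hT'.le_add_of_le_apply_add hγ1 hv' fun s => (hv_le s).trans (hbackup s)
  have hv'_vstar : ∀ s, v' s ≤ vstar s := fun s => by
    simpa using hstar.le_add_of_le_apply_add (β := 0) hγ1 hvstar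
      (fun s => by linarith [hT'_le v' s, congrFun hv' s]) s
  have hvstar_v' : ∀ s, vstar s ≤ v' s + (γ * ‖v - vstar‖ + β / (1 - γ)) := fun s => by
    have hstar_step := hstar vstar v _ (apply_le_add_of_norm_sub_le
      ((norm_sub_rev vstar v).le)) s
    have hT'_step := hT' v v' _ hv_v' s
    have hgeom : γ * (β / (1 - γ)) + β = β / (1 - γ) := by
      field_simp [(by linarith : (1 - γ) ≠ 0)]
      ring
    linarith [hbackup s, congrFun hvstar s, congrFun hv' s]
  have hc : 0 ≤ γ * ‖v - vstar‖ + β / (1 - γ) := by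
    have : 0 < 1 - γ := by linarith
    positivity
  exact norm_sub_le_of_forall_le_add hc (fun s => by linarith [hv'_vstar s]) hvstar_v'

end AbstractBound

section MDP

variable {ι A : Type*} [Fintype ι]

lemma weighted_sum_le_add {q u w : ι → ℝ} {C : ℝ} (hq0 : ∀ i, 0 ≤ q i) (hq1 : ∑ i, q i = 1)
    (h : ∀ i, u i ≤ w i + C) : ∑ i, q i * u i ≤ ∑ i, q i * w i + C := by
  calc ∑ i, q i * u i ≤ ∑ i, q i * (w i + C) :=
        sum_le_sum fun i _ => mul_le_mul_of_nonneg_left (h i) (hq0 i)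
    _ = ∑ i, q i * w i + C := by simp only [mul_add, sum_add_distrib, ← sum_mul, hq1, one_mul]

lemma weighted_sum_le_sup' [Nonempty ι] {q : ι → ℝ} (hq0 : ∀ i, 0 ≤ q i) (hq1 : ∑ i, q i = 1)
    (u : ι → ℝ) : ∑ i, q i * u i ≤ univ.sup' univ_nonempty u := by
  calc ∑ i, q i * u i ≤ ∑ i, q i * univ.sup' univ_nonempty u :=
        sum_le_sum fun i _ => mul_le_mul_of_nonneg_left (le_sup' u (mem_univ i)) (hq0 i)
    _ = univ.sup' univ_nonempty u := by rw [← sum_mul, hq1, one_mul]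

def bellmanQ (r : ι → A → ℝ) (p : ι → A → ι → ℝ) (γ : ℝ) (v : ι → ℝ) (s : ι) (a : A) : ℝ :=
  r s a + γ * ∑ s', p s a s' * v s'

variable {r : ι → A → ℝ} {p : ι → A → ι → ℝ} {γ : ℝ}

lemma bellmanQ_le_add (hp0 : ∀ s a s', 0 ≤ p s a s') (hp1 : ∀ s a, ∑ s', p s a s' = 1)
    (hγ0 : 0 ≤ γ) {u w : ι → ℝ} {C : ℝ} (h : ∀ s, u s ≤ w s + C) (s : ι) (a : A) :
    bellmanQ r p γ u s a ≤ bellmanQ r p γ w s a + γ * C := by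
  have := mul_le_mul_of_nonneg_left (weighted_sum_le_add (hp0 s a) (hp1 s a) h) hγ0
  unfold bellmanQ
  linarith

lemma discountedMonotone_policy [Fintype A] (hp0 : ∀ s a s', 0 ≤ p s a s')
    (hp1 : ∀ s a, ∑ s', p s a s' = 1) (hγ0 : 0 ≤ γ) {π : ι → A → ℝ} (hπ0 : ∀ s a, 0 ≤ π s a)
    (hπ1 : ∀ s, ∑ a, π s a = 1) {T : (ι → ℝ) → ι → ℝ}
    (hT : ∀ v s, T v s = ∑ a, π s a * bellmanQ r p γ v s a) : DiscountedMonotone γ T :=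
  fun _ _ _ h s => by
    simpa only [hT] using weighted_sum_le_add (hπ0 s) (hπ1 s) (bellmanQ_le_add hp0 hp1 hγ0 h s)

lemma discountedMonotone_optimal [Fintype A] [Nonempty A] (hp0 : ∀ s a s', 0 ≤ p s a s')
    (hp1 : ∀ s a, ∑ s', p s a s' = 1) (hγ0 : 0 ≤ γ) {T : (ι → ℝ) → ι → ℝ}
    (hT : ∀ v s, T v s = univ.sup' univ_nonempty (bellmanQ r p γ v s)) :
    DiscountedMonotone γ T :=
  fun u w _ h s => by
    rw [hT, hT]
    exact sup'_le _ _ fun a _ =>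
      (bellmanQ_le_add hp0 hp1 hγ0 h s a).trans (by gcongr; exact le_sup' _ (mem_univ a))

lemma policy_le_optimal [Fintype A] [Nonempty A] {π : ι → A → ℝ} (hπ0 : ∀ s a, 0 ≤ π s a)
    (hπ1 : ∀ s, ∑ a, π s a = 1) {T Tstar : (ι → ℝ) → ι → ℝ}
    (hT : ∀ v s, T v s = ∑ a, π s a * bellmanQ r p γ v s a)
    (hTstar : ∀ v s, Tstar v s = univ.sup' univ_nonempty (bellmanQ r p γ v s)) (v : ι → ℝ)
    (s : ι) : T v s ≤ Tstar v s := by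
  rw [hT, hTstar]
  exact weighted_sum_le_sup' (hπ0 s) (hπ1 s) _

end MDP

theorem approximate_policy_iteration_one_step_bound_general
    {n : ℕ} {A : Type*} [Fintype A] [Nonempty A]
    (r : Fin n → A → ℝ) (p : Fin n → A → Fin n → ℝ)
    (hp_nonneg : ∀ s a s', 0 ≤ p s a s') (hp_sum : ∀ s a, ∑ s', p s a s' = 1)
    (γ : ℝ) (hγ0 : 0 ≤ γ) (hγ1 : γ < 1)
    (π π' : Fin n → A → ℝ)
    (hπ_nonneg : ∀ s a, 0 ≤ π s a) (hπ_sum : ∀ s, ∑ a, π s a = 1)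
    (hπ'_nonneg : ∀ s a, 0 ≤ π' s a) (hπ'_sum : ∀ s, ∑ a, π' s a = 1)
    (Tπ Tπ' Tstar : (Fin n → ℝ) → (Fin n → ℝ))
    (hTπ : ∀ v s, Tπ v s = ∑ a, π s a * (r s a + γ * ∑ s', p s a s' * v s'))
    (hTπ' : ∀ v s, Tπ' v s = ∑ a, π' s a * (r s a + γ * ∑ s', p s a s' * v s'))
    (hTstar : ∀ v s, Tstar v s =
      Finset.univ.sup' Finset.univ_nonempty (fun a : A => r s a + γ * ∑ s', p s a s' * v s'))
    (vπ : Fin n → ℝ) (hvπ : Tπ vπ = vπ)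
    (vπ' : Fin n → ℝ) (hvπ' : Tπ' vπ' = vπ')
    (vstar : Fin n → ℝ) (hvstar : Tstar vstar = vstar)
    (ε δ : ℝ)
    (V : Fin n → ℝ) (hpev : ‖V - vπ‖ ≤ ε) (hpim : ‖Tπ' V - Tstar V‖ ≤ δ) :
    ‖vπ' - vstar‖ ≤ γ * ‖vπ - vstar‖ + (δ + 2 * γ * ε) / (1 - γ) := by
  have hstar := discountedMonotone_optimal hp_nonneg hp_sum hγ0 hTstar
  have hπ' := discountedMonotone_policy hp_nonneg hp_sum hγ0 hπ'_nonneg hπ'_sum hTπ'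
  have hπ_le := policy_le_optimal hπ_nonneg hπ_sum hTπ hTstar
  have hπ'_le := policy_le_optimal hπ'_nonneg hπ'_sum hTπ' hTstar
  exact norm_sub_le_of_approx_policy_improvement hγ0 hγ1 hstar hπ' hπ'_le
    (fun s => by simpa only [hvπ] using hπ_le vπ s) hvπ' hvstar hpev hpim

/-- One-step error bound for approximate policy iteration: if
`‖V − v^π‖_∞ ≤ ε` and `‖T_{π'} V − T_* V‖_∞ ≤ δ`, then
`‖v^{π'} − v*‖_∞ ≤ γ ‖v^π − v*‖_∞ + (δ + 2γε)/(1−γ)`. -/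
theorem approximate_policy_iteration_one_step_bound
    {n : ℕ} {A : Type*} [Fintype A] [Nonempty A]
    (r : Fin n → A → ℝ) (p : Fin n → A → Fin n → ℝ)
    (hp_nonneg : ∀ s a s', 0 ≤ p s a s') (hp_sum : ∀ s a, ∑ s', p s a s' = 1)
    (γ : ℝ) (hγ0 : 0 ≤ γ) (hγ1 : γ < 1)
    (π π' : Fin n → A → ℝ)
    (hπ_nonneg : ∀ s a, 0 ≤ π s a) (hπ_sum : ∀ s, ∑ a, π s a = 1)
    (hπ'_nonneg : ∀ s a, 0 ≤ π' s a) (hπ'_sum : ∀ s, ∑ a, π' s a = 1)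
    (Tπ Tπ' Tstar : (Fin n → ℝ) → (Fin n → ℝ))
    (hTπ : ∀ v s, Tπ v s = ∑ a, π s a * (r s a + γ * ∑ s', p s a s' * v s'))
    (hTπ' : ∀ v s, Tπ' v s = ∑ a, π' s a * (r s a + γ * ∑ s', p s a s' * v s'))
    (hTstar : ∀ v s, Tstar v s =
      Finset.univ.sup' Finset.univ_nonempty (fun a : A => r s a + γ * ∑ s', p s a s' * v s'))
    (vπ : Fin n → ℝ) (hvπ : Tπ vπ = vπ)
    (vπ' : Fin n → ℝ) (hvπ' : Tπ' vπ' = vπ')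
    (vstar : Fin n → ℝ) (hvstar : Tstar vstar = vstar)
    (ε δ : ℝ) (hε : 0 ≤ ε) (hδ : 0 ≤ δ)
    (V : Fin n → ℝ) (hpev : ‖V - vπ‖ ≤ ε) (hpim : ‖Tπ' V - Tstar V‖ ≤ δ) :
    ‖vπ' - vstar‖ ≤ γ * ‖vπ - vstar‖ + (δ + 2 * γ * ε) / (1 - γ) :=
  approximate_policy_iteration_one_step_bound_general r p hp_nonneg hp_sum γ hγ0 hγ1 π π' hπ_nonneg
    hπ_sum hπ'_nonneg hπ'_sum Tπ Tπ' Tstar hTπ hTπ' hTstar vπ hvπ vπ' hvπ' vstar hvstar ε δ V hpev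
    hpim
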